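/- The function p(β) = (1/(4π)) ∫_{−π}^{π} [(1 − 1/β)/(1 + 2 sin φ·β^{−1/2} + 1/β)] · exp(−c·(1 + 2 sin φ·β^{−1/2} + 1/β)) dφ, with c > 0 fixed, is decreasing in β for β > 1. -/

import Mathlib

/-!
Put `b = β^(-1/2) ∈ (0, 1)` and `u = 1 + 2 b sin φ + b²`; the integrand becomes
`(1 - b²) / u · exp (-c u)`, so it suffices that its integral increases strictly in `b`.
The `b`-derivative of the integrand splits as `∂_φ G + 2 c exp (-c u) (b - sin φ)` with
`G = 2 exp (-c u) cos φ / u`. The first term integrates to zero over a period, and pairing `φ`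
with `-φ` shows that the second has positive integral, because `exp (-c u)` is larger where
`sin φ < 0`.
-/

open MeasureTheory Real Set Function Metric Topology

theorem intervalIntegral.hasDerivAt_integral_of_continuousOn {E : Type*} [NormedAddCommGroup E]
    [NormedSpace ℝ E] {F F' : ℝ → ℝ → E} {s : Set ℝ} {x₀ a b : ℝ} (hs : s ∈ 𝓝 x₀)
    (hF : ∀ x ∈ s, Continuous (F x)) (hF' : ContinuousOn (uncurry F') (s ×ˢ univ))
    (hderiv : ∀ x ∈ s, ∀ t, HasDerivAt (F · t) (F' x t) x) :
    HasDerivAt (fun x => ∫ t in a..b, F x t) (∫ t in a..b, F' x₀ t) x₀ := by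
  obtain ⟨ε, hε, hεs⟩ := nhds_basis_closedBall.mem_iff.1 hs
  obtain ⟨C, hC⟩ := (isCompact_closedBall x₀ ε).prod isCompact_uIcc |>.exists_bound_of_continuousOn
    (hF'.mono (prod_mono hεs (subset_univ (uIcc a b))))
  have hx₀ : x₀ ∈ s := mem_of_mem_nhds hs
  refine (hasDerivAt_integral_of_dominated_loc_of_deriv_le (bound := fun _ => C)
    (closedBall_mem_nhds x₀ hε) ?_ ((hF x₀ hx₀).intervalIntegrable _ _) ?_ ?_
    intervalIntegrable_const ?_).2
  · filter_upwards [hs] with x hx using (hF x hx).aestronglyMeasurable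
  · exact (hF'.comp_continuous (Continuous.prodMk_right x₀) fun t => ⟨hx₀, trivial⟩)
      |>.aestronglyMeasurable
  · exact ae_of_all _ fun t ht x hx => hC (x, t) ⟨hx, uIoc_subset_uIcc ht⟩
  · exact ae_of_all _ fun t _ x hx => hderiv x (hεs hx) t

theorem intervalIntegral.integral_pos_of_pos_add_comp_neg {h : ℝ → ℝ} {a : ℝ} (ha : 0 < a)
    (hh : Continuous h) (hpos : ∀ x, 0 < h x + h (-x)) : 0 < ∫ x in -a..a, h x := by
  have hsum : (∫ x in -a..a, (h x + h (-x))) = 2 * ∫ x in -a..a, h x := by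
    rw [intervalIntegral.integral_add (hh.intervalIntegrable _ _)
      ((hh.comp' continuous_neg).intervalIntegrable _ _),
      intervalIntegral.integral_comp_neg (f := h), neg_neg, two_mul]
  have : 0 < ∫ x in -a..a, (h x + h (-x)) :=
    intervalIntegral.intervalIntegral_pos_of_pos_on
      ((hh.add (hh.comp' continuous_neg)).intervalIntegrable _ _) (fun x _ => hpos x) (by linarith)
  linarith

namespace PairwiseError

noncomputable def denom (b φ : ℝ) : ℝ := 1 + 2 * sin φ * b + b ^ 2

noncomputable def integrand (c b φ : ℝ) : ℝ :=
  (1 - b ^ 2) / denom b φ * exp (-c * denom b φ)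

noncomputable def potential (c b φ : ℝ) : ℝ := 2 * exp (-c * denom b φ) * cos φ / denom b φ

noncomputable def potentialDeriv (c b φ : ℝ) : ℝ :=
  -2 * exp (-c * denom b φ) *
    ((2 * c * b * cos φ ^ 2 + sin φ) / denom b φ + 2 * b * cos φ ^ 2 / denom b φ ^ 2)

noncomputable def integrandDeriv (c b φ : ℝ) : ℝ :=
  potentialDeriv c b φ + 2 * c * exp (-c * denom b φ) * (b - sin φ)

theorem denom_pos {b : ℝ} (hb : b ∈ Ioo (-1) 1) (φ : ℝ) : 0 < denom b φ := by
  replace hb : |b| < 1 := abs_lt.2 hb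
  have hsb : |sin φ * b| ≤ |b| := by
    rw [abs_mul]; exact mul_le_of_le_one_left (abs_nonneg b) (abs_sin_le_one φ)
  have hsq : 0 < (1 - |b|) ^ 2 := by have := abs_nonneg b; positivity
  unfold denom
  nlinarith [neg_abs_le (sin φ * b), sq_abs b]

theorem continuous_denom (b : ℝ) : Continuous (denom b) := by
  unfold denom; fun_prop

theorem hasDerivAt_potential (c b φ : ℝ) (hu : denom b φ ≠ 0) :
    HasDerivAt (potential c b) (potentialDeriv c b φ) φ := by
  have hden : HasDerivAt (denom b) (2 * cos φ * b) φ :=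
    ((((hasDerivAt_sin φ).const_mul 2).mul_const b).const_add 1).add_const (b ^ 2)
  refine ((((hden.const_mul (-c)).exp.const_mul 2).mul (hasDerivAt_cos φ)).div hden hu
    ).congr_deriv ?_
  unfold potentialDeriv
  simp only [Pi.mul_apply]
  field_simp
  ring

theorem hasDerivAt_integrand (c b φ : ℝ) (hu : denom b φ ≠ 0) :
    HasDerivAt (integrand c · φ) (integrandDeriv c b φ) b := by
  have hden : HasDerivAt (denom · φ) (2 * sin φ + 2 * b) b := by
    refine ((((hasDerivAt_id b).const_mul (2 * sin φ)).const_add 1).add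
      ((hasDerivAt_id b).pow 2)).congr_deriv ?_
    norm_num
  have hnum : HasDerivAt (fun b : ℝ => 1 - b ^ 2) (-(2 * b)) b := by
    refine (((hasDerivAt_id b).pow 2).const_sub 1).congr_deriv ?_
    norm_num
  refine ((hnum.div hden hu).mul (hden.const_mul (-c)).exp).congr_deriv ?_
  have hcos : cos φ ^ 2 = 1 - sin φ ^ 2 := by linarith [sin_sq_add_cos_sq φ]
  unfold integrandDeriv potentialDeriv
  simp only [Pi.div_apply]
  rw [hcos]
  field_simp
  unfold denom
  ring

theorem continuous_potentialDeriv (c : ℝ) {b : ℝ} (hb : b ∈ Ioo (-1) 1) :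
    Continuous (potentialDeriv c b) := by
  have := continuous_denom b
  have hu := fun φ => (denom_pos hb φ).ne'
  unfold potentialDeriv
  fun_prop (disch := simp [hu])

theorem integral_potentialDeriv (c : ℝ) {b : ℝ} (hb : b ∈ Ioo (-1) 1) :
    ∫ φ in -π..π, potentialDeriv c b φ = 0 := by
  rw [intervalIntegral.integral_eq_sub_of_hasDerivAt
    (fun φ _ => hasDerivAt_potential c b φ (denom_pos hb φ).ne')
    ((continuous_potentialDeriv c hb).intervalIntegrable _ _)]
  simp [potential, denom]

theorem integral_exp_mul_sub_sin_pos {c b : ℝ} (hc : 0 ≤ c) (hb : 0 < b) :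
    0 < ∫ φ in -π..π, exp (-c * denom b φ) * (b - sin φ) := by
  refine intervalIntegral.integral_pos_of_pos_add_comp_neg pi_pos (by unfold denom; fun_prop)
    fun φ => ?_
  have hodd : 0 ≤ sin φ * (exp (-c * denom b (-φ)) - exp (-c * denom b φ)) := by
    unfold denom
    rw [sin_neg]
    rcases le_total 0 (sin φ) with hs | hs
    · exact mul_nonneg hs (sub_nonneg.2 (exp_le_exp.2 (by nlinarith [mul_nonneg hc hs])))
    · exact mul_nonneg_of_nonpos_of_nonpos hs
        (sub_nonpos.2 (exp_le_exp.2 (by nlinarith [mul_nonneg hc (neg_nonneg.2 hs)])))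
  rw [sin_neg]
  nlinarith [mul_pos hb (exp_pos (-c * denom b φ)), mul_pos hb (exp_pos (-c * denom b (-φ)))]

theorem continuousOn_integrandDeriv (c : ℝ) :
    ContinuousOn (uncurry (integrandDeriv c)) (Ioo (-1) 1 ×ˢ univ) := by
  have hu : ∀ p ∈ Ioo (-1) 1 ×ˢ (univ : Set ℝ), denom p.1 p.2 ≠ 0 :=
    fun p hp => (denom_pos hp.1 p.2).ne'
  have hu₂ : ∀ p ∈ Ioo (-1) 1 ×ˢ (univ : Set ℝ), denom p.1 p.2 ^ 2 ≠ 0 :=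
    fun p hp => pow_ne_zero 2 (hu p hp)
  unfold uncurry integrandDeriv potentialDeriv
  unfold denom at hu hu₂ ⊢
  fun_prop (disch := assumption)

theorem continuous_integrand (c : ℝ) {b : ℝ} (hb : b ∈ Ioo (-1) 1) :
    Continuous (integrand c b) := by
  have := continuous_denom b
  have hu := fun φ => (denom_pos hb φ).ne'
  unfold integrand
  fun_prop (disch := exact hu)

theorem hasDerivAt_integral_integrand (c : ℝ) {b : ℝ} (hb : b ∈ Ioo (-1) 1) :
    HasDerivAt (fun b => ∫ φ in -π..π, integrand c b φ) (∫ φ in -π..π, integrandDeriv c b φ) b :=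
  intervalIntegral.hasDerivAt_integral_of_continuousOn (Ioo_mem_nhds hb.1 hb.2)
    (fun _ hx => continuous_integrand c hx) (continuousOn_integrandDeriv c)
    fun x hx φ => hasDerivAt_integrand c x φ (denom_pos hx φ).ne'

theorem integral_integrandDeriv_pos {c b : ℝ} (hc : 0 < c) (hb : b ∈ Ioo 0 1) :
    0 < ∫ φ in -π..π, integrandDeriv c b φ := by
  have hb' : b ∈ Ioo (-1) 1 := Ioo_subset_Ioo_left (by norm_num) hb
  have hdrift : Continuous fun φ => 2 * c * exp (-c * denom b φ) * (b - sin φ) := by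
    have := continuous_denom b
    fun_prop
  unfold integrandDeriv
  rw [intervalIntegral.integral_add ((continuous_potentialDeriv c hb').intervalIntegrable _ _)
    (hdrift.intervalIntegrable _ _), integral_potentialDeriv c hb', zero_add]
  simp only [mul_assoc, intervalIntegral.integral_const_mul]
  have := integral_exp_mul_sub_sin_pos hc.le hb.1
  positivity

theorem strictMonoOn_integral_integrand {c : ℝ} (hc : 0 < c) :
    StrictMonoOn (fun b => ∫ φ in -π..π, integrand c b φ) (Ioo 0 1) := by
  have hderiv : ∀ b ∈ Ioo (0 : ℝ) 1, HasDerivAt (fun b => ∫ φ in -π..π, integrand c b φ)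
      (∫ φ in -π..π, integrandDeriv c b φ) b :=
    fun b hb => hasDerivAt_integral_integrand c (Ioo_subset_Ioo_left (by norm_num) hb)
  refine strictMonoOn_of_deriv_pos (convex_Ioo 0 1)
    (fun b hb => (hderiv b hb).continuousAt.continuousWithinAt) fun b hb => ?_
  rw [interior_Ioo] at hb
  rw [(hderiv b hb).deriv]
  exact integral_integrandDeriv_pos hc hb

theorem integrand_inv_sqrt (c : ℝ) {β : ℝ} (hβ : 0 ≤ β) (φ : ℝ) :
    integrand c (√β)⁻¹ φ = (1 - 1 / β) / (1 + 2 * sin φ / √β + 1 / β) *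
      exp (-c * (1 + 2 * sin φ / √β + 1 / β)) := by
  have hsq : (√β)⁻¹ ^ 2 = 1 / β := by rw [inv_pow, sq_sqrt hβ, one_div]
  simp only [integrand, denom, hsq, div_eq_mul_inv]

end PairwiseError

open PairwiseError in
/-- The pairwise error probability expression
`p(β) = (1/(4π)) ∫_{−π}^{π} [(1 − 1/β)/(1 + 2 sin φ/√β + 1/β)]
  exp(−c (1 + 2 sin φ/√β + 1/β)) dφ`, with `c > 0` fixed, is (strictly)
decreasing in `β` on `β > 1`: a larger forward-to-backward gain ratio yields a
smaller pairwise error probability. -/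
theorem pairwise_error_strictAnti (c : ℝ) (hc : 0 < c) :
    StrictAntiOn (fun β : ℝ =>
      (1 / (4 * Real.pi)) * ∫ φ in (-Real.pi)..Real.pi,
        ((1 - 1 / β) / (1 + 2 * Real.sin φ / Real.sqrt β + 1 / β)) *
          Real.exp (-c * (1 + 2 * Real.sin φ / Real.sqrt β + 1 / β)))
      (Set.Ioi 1) := by
  have hmono : StrictMonoOn (fun b => 1 / (4 * π) * ∫ φ in -π..π, integrand c b φ) (Ioo 0 1) :=
    fun x hx y hy hxy =>
      mul_lt_mul_of_pos_left (strictMonoOn_integral_integrand hc hx hy hxy) (by positivity)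
  have hinv : StrictAntiOn (fun β : ℝ => (√β)⁻¹) (Ioi 1) := fun x hx y _ hxy =>
    inv_strictAnti₀ (sqrt_pos.2 (zero_lt_one.trans hx)) (sqrt_lt_sqrt (zero_le_one.trans hx.le) hxy)
  have hmaps : MapsTo (fun β : ℝ => (√β)⁻¹) (Ioi 1) (Ioo 0 1) := fun β hβ =>
    ⟨inv_pos.2 (sqrt_pos.2 (zero_lt_one.trans hβ)),
      inv_lt_one_of_one_lt₀ (by rwa [lt_sqrt zero_le_one, one_pow])⟩
  refine (hmono.comp_strictAntiOn hinv hmaps).congr fun β hβ => ?_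
  simp only [comp_apply, integrand_inv_sqrt c ((zero_lt_one.trans hβ).le)]
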